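/- (Impossibility of a linear demand-private (2,2; M=1, R=1/2) scheme with subpacketization 2.) For any field F, there do not exist matrices C₀, C₁ ∈ F^{2×4}, each of rank 2, and transmissions T : {0,1}² → F⁴ such that both of the following hold: (correctness) for every demand pair (d₀,d₁) ∈ {0,1}² and every user i ∈ {0,1}, the cache C_i recovers file d_i from T(d₀,d₁) — that is, e₀, e₁ ∈ span(rows of C_i ∪ {T(d₀,d₁)}) if d_i = 0, and e₂, e₃ ∈ span(rows of C_i ∪ {T(d₀,d₁)}) if d_i = 1; and (necessary privacy condition) the last two coordinates of T(0,0) are not both zero. -/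

import Mathlib

/-- Coordinates of `F⁴` correspond to the subfiles `A₀, A₁, B₀, B₁`.  A user with
cache rows `c1, c2` recovers file `A` from transmission `t` iff `e₀` and `e₁`
lie in the span of `{c1, c2, t}`. -/
def recoversA {F : Type*} [Field F] (c1 c2 t : Fin 4 → F) : Prop :=
  (Pi.single 0 1 : Fin 4 → F) ∈ Submodule.span F {c1, c2, t} ∧
  (Pi.single 1 1 : Fin 4 → F) ∈ Submodule.span F {c1, c2, t}

/-- A user with cache rows `c1, c2` recovers file `B` from transmission `t` iff
`e₂` and `e₃` lie in the span of `{c1, c2, t}`. -/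
def recoversB {F : Type*} [Field F] (c1 c2 t : Fin 4 → F) : Prop :=
  (Pi.single 2 1 : Fin 4 → F) ∈ Submodule.span F {c1, c2, t} ∧
  (Pi.single 3 1 : Fin 4 → F) ∈ Submodule.span F {c1, c2, t}

/-!
Project `F⁴` onto the coordinates `B₀, B₁` of file `B`; the kernel is `W = span {e₀, e₁}`.
If a user decodes `A` from its cache `V` and a transmission `t`, then `W ⊆ V + ⟨t⟩`, which has
dimension at most `3`, so the projection of `V + ⟨t⟩` is at most a line; if it decodes `B`, the
projection is the whole plane. Under demand `(A, A)` both caches therefore project into the line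
through the projection `u` of `T(A, A)`, which is nonzero by the privacy condition, and under
demand `(B, B)` the projection of user `0`'s cache is nonzero, hence equal to `F u`. Under demand
`(A, B)` user `0` forces the projection of `T(A, B)` onto `F u` too, so user `1` sees only the
line `F u` and cannot decode `B`.
-/

open Module Submodule

section LinearAlgebra

variable {F M N : Type*} [Field F] [AddCommGroup M] [Module F M] [AddCommGroup N] [Module F N]

theorem finrank_map_add_finrank_le_of_le_ker (f : M →ₗ[F] N) {U K : Submodule F M}
    [FiniteDimensional F U] (hKU : K ≤ U) (hKf : K ≤ LinearMap.ker f) :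
    finrank F (U.map f) + finrank F K ≤ finrank F U := by
  rw [← LinearMap.range_domRestrict, ← (f.domRestrict U).finrank_range_add_finrank_ker,
    LinearMap.ker_domRestrict]
  gcongr
  calc finrank F K = finrank F (K.comap U.subtype) := (comapSubtypeEquivOfLe hKU).finrank_eq.symm
    _ ≤ _ := Submodule.finrank_mono (comap_mono hKf)

theorem span_triple_eq_sup (a b t : M) : span F {a, b, t} = span F {a, b} ⊔ F ∙ t := by
  rw [← span_union, Set.insert_union, Set.singleton_union]

theorem map_span_triple_eq_sup (f : M →ₗ[F] N) (a b t : M) :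
    (span F {a, b, t}).map f = (span F {a, b}).map f ⊔ F ∙ f t := by
  rw [span_triple_eq_sup, Submodule.map_sup, map_span f {t}, Set.image_singleton]

theorem le_of_ne_bot_of_finrank_sup_le_one [FiniteDimensional F N] {K K' : Submodule F N}
    (hK : K ≠ ⊥) (h : finrank F ↥(K ⊔ K') ≤ 1) : K' ≤ K := by
  have : K = K ⊔ K' := eq_of_le_of_finrank_le le_sup_left (h.trans (one_le_finrank_iff.mpr hK))
  exact this ▸ le_sup_right

theorem span_singleton_ne_top_of_one_lt_finrank (h : 1 < finrank F N) (x : N) :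
    (F ∙ x) ≠ ⊤ := by
  intro hx
  have := finrank_span_le_card (R := F) ({x} : Set N)
  rw [hx, finrank_top, Set.toFinset_singleton, Finset.card_singleton] at this
  omega

end LinearAlgebra

section Caching

variable {F : Type*} [Field F]

abbrev projB : (Fin 4 → F) →ₗ[F] (Fin 2 → F) := LinearMap.funLeft F F ![2, 3]

theorem projB_eq_zero_iff {t : Fin 4 → F} : projB t = 0 ↔ t 2 = 0 ∧ t 3 = 0 := by
  simp [funext_iff, Fin.forall_fin_two]

theorem recoversA.finrank_sup_le_one {c1 c2 t : Fin 4 → F} (h : recoversA c1 c2 t) :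
    finrank F ↥((span F {c1, c2}).map projB ⊔ F ∙ projB t) ≤ 1 := by
  have hK : span F {Pi.single 0 1, Pi.single 1 1} ≤ span F {c1, c2, t} := by
    rw [span_le]; rintro _ (rfl | rfl); exacts [h.1, h.2]
  have hker : span F {Pi.single 0 1, Pi.single 1 1} ≤ LinearMap.ker (projB (F := F)) := by
    rw [span_le]
    rintro _ (rfl | rfl) <;> ext i <;> fin_cases i <;> rfl
  have hrank : finrank F (span F {(Pi.single 0 1 : Fin 4 → F), Pi.single 1 1}) = 2 := by
    have hli : LinearIndependent F ![(Pi.single 0 1 : Fin 4 → F), Pi.single 1 1] :=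
      LinearIndependent.pair_iff.mpr fun s t hst ↦
        ⟨by simpa using congrFun hst 0, by simpa using congrFun hst 1⟩
    have := finrank_span_eq_card hli
    rwa [Matrix.range_cons_cons_empty, Fintype.card_fin] at this
  have h3 : finrank F (span F {c1, c2, t}) ≤ 3 := by
    have := finrank_range_le_card (R := F) ![c1, c2, t]
    rwa [Matrix.range_cons, Matrix.range_cons_cons_empty, Set.singleton_union,
      Fintype.card_fin] at this
  have := finrank_map_add_finrank_le_of_le_ker projB hK hker
  rw [map_span_triple_eq_sup] at this
  omega

theorem recoversB.sup_eq_top {c1 c2 t : Fin 4 → F} (h : recoversB c1 c2 t) :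
    (span F {c1, c2}).map projB ⊔ F ∙ projB t = ⊤ := by
  rw [← map_span_triple_eq_sup, eq_top_iff,
    ← (Pi.basisFun F (Fin 2)).span_eq, span_le]
  rintro _ ⟨i, rfl⟩
  fin_cases i
  exacts [⟨_, h.1, by ext j; fin_cases j <;> simp⟩, ⟨_, h.2, by ext j; fin_cases j <;> simp⟩]

end Caching

/-- Impossibility of a linear demand-private `(2,2; M=1, R=1/2)` scheme with
subpacketization 2: there are no rank-2 cache matrices `C₀, C₁ ∈ F^{2×4}` and
transmissions `T (d₀,d₁) ∈ F⁴` such that every user `i` recovers its demanded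
file `d_i` from its cache and `T (d₀,d₁)` (demand `0` = file `A`, `1` = file
`B`), while the transmission `T (0,0)` for demand `(A,A)` involves file `B`
nontrivially (the necessary condition for demand privacy). -/
theorem no_private_scheme_subpacketization_two (F : Type*) [Field F] :
    ¬ ∃ (C0 C1 : Matrix (Fin 2) (Fin 4) F) (T : Fin 2 × Fin 2 → Fin 4 → F),
      C0.rank = 2 ∧ C1.rank = 2 ∧
      (∀ (d : Fin 2 × Fin 2) (i : Fin 2),
        if (if i = 0 then d.1 else d.2) = 0 then
          recoversA ((if i = 0 then C0 else C1) 0) ((if i = 0 then C0 else C1) 1) (T d)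
        else
          recoversB ((if i = 0 then C0 else C1) 0) ((if i = 0 then C0 else C1) 1) (T d)) ∧
      ¬ (T (0, 0) 2 = 0 ∧ T (0, 0) 3 = 0) := by
  rintro ⟨C0, C1, T, -, -, hcor, hpriv⟩
  set L0 := (span F {C0 0, C0 1}).map projB
  set L1 := (span F {C1 0, C1 1}).map projB
  set u := projB (T (0, 0))
  have hAA0 : finrank F ↥(L0 ⊔ F ∙ u) ≤ 1 :=
    recoversA.finrank_sup_le_one (by simpa using hcor (0, 0) 0)
  have hAA1 : finrank F ↥(L1 ⊔ F ∙ u) ≤ 1 :=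
    recoversA.finrank_sup_le_one (by simpa using hcor (0, 0) 1)
  have hBB0 : L0 ⊔ F ∙ projB (T (1, 1)) = ⊤ :=
    recoversB.sup_eq_top (by simpa using hcor (1, 1) 0)
  have hAB0 : finrank F ↥(L0 ⊔ F ∙ projB (T (0, 1))) ≤ 1 :=
    recoversA.finrank_sup_le_one (by simpa using hcor (0, 1) 0)
  have hAB1 : L1 ⊔ F ∙ projB (T (0, 1)) = ⊤ :=
    recoversB.sup_eq_top (by simpa using hcor (0, 1) 1)
  have hu : (F ∙ u) ≠ ⊥ := span_singleton_eq_bot.not.mpr (projB_eq_zero_iff.not.mpr hpriv)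
  have hplane : 1 < finrank F (Fin 2 → F) := by simp
  have hL0 : L0 ≤ F ∙ u := le_of_ne_bot_of_finrank_sup_le_one hu (sup_comm L0 _ ▸ hAA0)
  have hL1 : L1 ≤ F ∙ u := le_of_ne_bot_of_finrank_sup_le_one hu (sup_comm L1 _ ▸ hAA1)
  have hL0_ne : L0 ≠ ⊥ := fun h ↦
    span_singleton_ne_top_of_one_lt_finrank hplane _ (by rwa [h, bot_sup_eq] at hBB0)
  have hv : F ∙ projB (T (0, 1)) ≤ L0 := le_of_ne_bot_of_finrank_sup_le_one hL0_ne hAB0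
  refine span_singleton_ne_top_of_one_lt_finrank hplane u (eq_top_iff.mpr ?_)
  exact hAB1 ▸ sup_le hL1 (hv.trans hL0)
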